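/- arXiv:1903.10004 — 2 statements merged into one kernel-verified Lean document; each statement's English description precedes it below -/
import Mathlib

section
/- Let x ∈ ℝⁿ and let v be a point derivation at x of the ℝ-algebra C^∞(ℝⁿ, ℝ). Then v satisfies the chain rule: for every k ∈ ℕ, all f₁, ..., f_k ∈ C^∞(ℝⁿ, ℝ), and every F ∈ C^∞(ℝᵏ, ℝ), v(F(f₁, ..., f_k)) = Σ_{i=1}^{k} (∂ᵢF)(f₁(x), ..., f_k(x)) · v(fᵢ), where F(f₁, ..., f_k) denotes the function y ↦ F(f₁(y), ..., f_k(y)) and ∂₁, ..., ∂_k are the partial derivatives in ℝᵏ. -/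
open ContDiff Topology
open scoped NNReal ENNReal

variable {k : ℕ}

lemma param_integral_contDiff (G : (Fin k → ℝ) → ℝ → ℝ)
    (hG : ContDiff ℝ (⊤ : ℕ∞) (fun q : (Fin k → ℝ) × ℝ => G q.1 q.2)) :
    ContDiff ℝ (⊤ : ℕ∞) (fun y => ∫ t in (0:ℝ)..1, G y t) := by
  let χ : ContDiffBump (0:ℝ) := ⟨2, 3, by norm_num, by norm_num⟩
  set g : (Fin k → ℝ) → ℝ → ℝ := fun p u => χ (-u) * G p (-u) with hgdef
  set f0 : ℝ → ℝ := (Set.Ioc (0:ℝ) 1).indicator 1 with hf0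
  have hgs : ∀ p, ∀ u, p ∈ (Set.univ : Set (Fin k → ℝ)) →
      u ∉ Metric.closedBall (0:ℝ) 3 → g p u = 0 := by
    intro p u _ hu
    have : χ (-u) = 0 := by
      apply χ.zero_of_le_dist
      rw [Metric.mem_closedBall, dist_zero_right] at hu
      rw [dist_zero_right, norm_neg]
      exact le_of_lt (not_le.1 hu)
    simp [hgdef, this]
  have hf : MeasureTheory.LocallyIntegrable f0 MeasureTheory.volume := by
    apply MeasureTheory.Integrable.locallyIntegrable
    rw [hf0, MeasureTheory.integrable_indicator_iff measurableSet_Ioc]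
    exact MeasureTheory.integrableOn_const (by simp)
  have hgc : ContDiffOn ℝ (⊤ : ℕ∞) (Function.uncurry g) (Set.univ ×ˢ Set.univ) := by
    apply ContDiff.contDiffOn
    have h1 : ContDiff ℝ (⊤ : ℕ∞) (fun q : (Fin k → ℝ) × ℝ => χ (-q.2)) :=
      χ.contDiff.comp contDiff_snd.neg
    have h2 : ContDiff ℝ (⊤ : ℕ∞) (fun q : (Fin k → ℝ) × ℝ => G q.1 (-q.2)) :=
      hG.comp (contDiff_fst.prodMk contDiff_snd.neg)
    exact h1.mul h2
  have hc := MeasureTheory.contDiffOn_convolution_right_with_param_comp (μ := MeasureTheory.volume)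
    (ContinuousLinearMap.lsmul ℝ ℝ) (v := fun _ : (Fin k → ℝ) => (0:ℝ)) contDiffOn_const
    isOpen_univ (isCompact_closedBall (0:ℝ) 3) hgs hf hgc
  rw [contDiffOn_univ] at hc
  convert hc using 1
  funext y
  rw [MeasureTheory.convolution_def, intervalIntegral.integral_of_le zero_le_one,
    ← MeasureTheory.integral_indicator measurableSet_Ioc]
  congr 1
  funext t
  by_cases ht : t ∈ Set.Ioc (0:ℝ) 1
  · have hχ : χ t = 1 := by
      apply χ.one_of_mem_closedBall
      rw [Metric.mem_closedBall, dist_zero_right, Real.norm_eq_abs, abs_le]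
      show -2 ≤ t ∧ t ≤ 2
      constructor <;> linarith [ht.1, ht.2]
    simp [Set.indicator_of_mem ht, hf0, hgdef, hχ]
  · simp [Set.indicator_of_notMem ht, hf0]

theorem hadamard_smooth (F : (Fin k → ℝ) → ℝ) (hF : ContDiff ℝ (⊤ : ℕ∞) F) (a : Fin k → ℝ) :
    ∃ g : Fin k → ((Fin k → ℝ) → ℝ), (∀ i, ContDiff ℝ (⊤ : ℕ∞) (g i)) ∧
      (∀ i, g i a = fderiv ℝ F a (Pi.single i 1)) ∧
      (∀ y, F y = F a + ∑ i : Fin k, (y i - a i) * g i y) := by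
  have hF' : ContDiff ℝ (⊤ : ℕ∞) (fderiv ℝ F) := hF.fderiv_right (by simp)
  have hFd : Differentiable ℝ F := hF.differentiable (by simp)
  refine ⟨fun i y => ∫ t in (0:ℝ)..1, fderiv ℝ F (a + t • (y - a)) (Pi.single i 1), ?_, ?_, ?_⟩
  · intro i
    apply param_integral_contDiff (fun y t => fderiv ℝ F (a + t • (y - a)) (Pi.single i 1))
    have : ContDiff ℝ (⊤ : ℕ∞) (fun q : (Fin k → ℝ) × ℝ => a + q.2 • (q.1 - a)) :=
      contDiff_const.add (contDiff_snd.smul (contDiff_fst.sub contDiff_const))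
    exact (hF'.comp this).clm_apply contDiff_const
  · intro i
    simp
  · intro y
    have hderiv : ∀ t ∈ Set.uIcc (0:ℝ) 1, HasDerivAt (fun s : ℝ => F (a + s • (y - a)))
        (fderiv ℝ F (a + t • (y - a)) (y - a)) t := by
      intro t _
      have hl : HasDerivAt (fun s : ℝ => a + s • (y - a)) (y - a) t := by
        simpa using ((hasDerivAt_id t).smul_const (y - a)).const_add a
      exact (hFd _).hasFDerivAt.comp_hasDerivAt t hl
    have hcont0 : Continuous (fun t : ℝ => fderiv ℝ F (a + t • (y - a))) :=
      hF'.continuous.comp (continuous_const.add (continuous_id.smul continuous_const))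
    have hint := intervalIntegral.integral_eq_sub_of_hasDerivAt hderiv
      ((hcont0.clm_apply continuous_const).intervalIntegrable 0 1)
    rw [one_smul, zero_smul, add_zero, add_sub_cancel] at hint
    have hsplit : ∀ t : ℝ, fderiv ℝ F (a + t • (y - a)) (y - a) =
        ∑ i : Fin k, (y i - a i) * fderiv ℝ F (a + t • (y - a)) (Pi.single i 1) := by
      intro t
      rw [show fderiv ℝ F (a + t • (y - a)) (y - a) =
          fderiv ℝ F (a + t • (y - a)) (∑ i, Pi.single i ((y - a) i)) by
        rw [Finset.univ_sum_single]]
      rw [map_sum]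
      apply Finset.sum_congr rfl
      intro i _
      have : (Pi.single i ((y - a) i) : Fin k → ℝ) = (y i - a i) • Pi.single i 1 := by
        ext j; by_cases h : j = i <;> simp [Pi.single_apply, h]
      rw [this, map_smul, smul_eq_mul]
    simp_rw [hsplit] at hint
    rw [intervalIntegral.integral_finset_sum] at hint
    · simp_rw [intervalIntegral.integral_const_mul] at hint
      beta_reduce
      linarith
    · intro i _
      exact (continuous_const.mul (hcont0.clm_apply continuous_const)).intervalIntegrable 0 1




/-- A point derivation of the ℝ-algebra `C^∞(ℝⁿ, ℝ)` at `x ∈ ℝⁿ`: an ℝ-linear map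
`v : C^∞(ℝⁿ, ℝ) → ℝ` satisfying Leibniz's rule at `x`. -/
def IsPointDerivationRn {n : ℕ} (x : Fin n → ℝ)
    (v : ((Fin n → ℝ) → ℝ) → ℝ) : Prop :=
  (∀ f g : (Fin n → ℝ) → ℝ, ContDiff ℝ (⊤ : ℕ∞) f → ContDiff ℝ (⊤ : ℕ∞) g →
    v (f + g) = v f + v g) ∧
  (∀ (c : ℝ) (f : (Fin n → ℝ) → ℝ), ContDiff ℝ (⊤ : ℕ∞) f → v (c • f) = c * v f) ∧
  (∀ f g : (Fin n → ℝ) → ℝ, ContDiff ℝ (⊤ : ℕ∞) f → ContDiff ℝ (⊤ : ℕ∞) g →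
    v (f * g) = v f * g x + f x * v g)

/-- point derivations of `C^∞(ℝⁿ, ℝ)` satisfy the chain rule:
`v (F(f₁, …, f_k)) = Σᵢ (∂ᵢF)(f₁ x, …, f_k x) · v fᵢ`. -/
theorem pointDerivationRn_chain_rule {n : ℕ} (x : Fin n → ℝ)
    (v : ((Fin n → ℝ) → ℝ) → ℝ) (hv : IsPointDerivationRn x v)
    (k : ℕ) (f : Fin k → ((Fin n → ℝ) → ℝ)) (hf : ∀ i, ContDiff ℝ (⊤ : ℕ∞) (f i))
    (F : (Fin k → ℝ) → ℝ) (hF : ContDiff ℝ (⊤ : ℕ∞) F) :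
    v (fun y => F (fun i => f i y)) =
      ∑ i : Fin k, fderiv ℝ F (fun i => f i x) (Pi.single i 1) * v (f i) := by
  obtain ⟨hadd, hsmul, hmul⟩ := hv
  have smooth1 : ContDiff ℝ (⊤ : ℕ∞) (1 : (Fin n → ℝ) → ℝ) := contDiff_const
  have hvone : v 1 = 0 := by
    have h := hmul 1 1 smooth1 smooth1
    rw [mul_one, Pi.one_apply, mul_one, one_mul] at h
    linarith
  have hvconst : ∀ c : ℝ, v (fun _ => c) = 0 := by
    intro c
    have hc : (fun _ : Fin n → ℝ => c) = c • (1 : (Fin n → ℝ) → ℝ) := by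
      funext y; simp
    rw [hc, hsmul c 1 smooth1, hvone, mul_zero]
  have hvsum : ∀ (s : Finset (Fin k)) (h : Fin k → ((Fin n → ℝ) → ℝ)),
      (∀ i, ContDiff ℝ (⊤ : ℕ∞) (h i)) → v (∑ i ∈ s, h i) = ∑ i ∈ s, v (h i) := by
    intro s h hh
    induction s using Finset.cons_induction with
    | empty =>
      have h0 : (0 : (Fin n → ℝ) → ℝ) = (0:ℝ) • (1 : (Fin n → ℝ) → ℝ) :=
        (zero_smul ℝ _).symm
      simp only [Finset.sum_empty]
      rw [h0, hsmul 0 1 smooth1, zero_mul]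
    | cons a s ha ih =>
      have hsc : ContDiff ℝ (⊤ : ℕ∞) (∑ i ∈ s, h i) := by
        have hsum_eq : (∑ i ∈ s, h i) = fun y => ∑ i ∈ s, h i y :=
          funext fun y => Finset.sum_apply _ _ _
        rw [hsum_eq]
        exact ContDiff.sum fun i _ => hh i
      rw [Finset.sum_cons, hadd _ _ (hh a) hsc, ih, Finset.sum_cons]
  set a : Fin k → ℝ := fun i => f i x with ha
  obtain ⟨g, hg, hga, hgid⟩ := hadamard_smooth F hF a
  set q : Fin k → ((Fin n → ℝ) → ℝ) := fun i y => g i (fun j => f j y) with hq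
  have hfvec : ContDiff ℝ (⊤ : ℕ∞) (fun y : Fin n → ℝ => (fun j => f j y : Fin k → ℝ)) :=
    contDiff_pi.2 hf
  have hqc : ∀ i, ContDiff ℝ (⊤ : ℕ∞) (q i) := fun i => (hg i).comp hfvec
  set p : Fin k → ((Fin n → ℝ) → ℝ) :=
    fun i => f i + (-(a i)) • (1 : (Fin n → ℝ) → ℝ) with hp
  have hpeq : ∀ i, p i = fun y => f i y + (-(a i)) := by
    intro i; funext y; simp [hp]
  have hpc : ∀ i, ContDiff ℝ (⊤ : ℕ∞) (p i) := by
    intro i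
    rw [hpeq i]
    exact (hf i).add contDiff_const
  have hdecomp : (fun y => F (fun i => f i y)) =
      (fun _ => F a) + ∑ i : Fin k, (p i * q i) := by
    funext y
    have hy := hgid (fun j => f j y)
    simp only [Pi.add_apply, Finset.sum_apply, Pi.mul_apply, hp, hq,
      Pi.smul_apply, Pi.one_apply, smul_eq_mul]
    rw [hy]
    congr 1
    apply Finset.sum_congr rfl
    intro i _
    ring
  have hPc : ∀ i, ContDiff ℝ (⊤ : ℕ∞) (p i * q i) := fun i => (hpc i).mul (hqc i)
  have hSc : ContDiff ℝ (⊤ : ℕ∞) (∑ i : Fin k, p i * q i) := by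
    have hsum_eq : (∑ i : Fin k, p i * q i) = fun y => ∑ i : Fin k, (p i * q i) y :=
      funext fun y => Finset.sum_apply _ _ _
    rw [hsum_eq]
    exact ContDiff.sum fun i _ => hPc i
  rw [hdecomp, hadd _ _ contDiff_const hSc, hvconst (F a), zero_add,
    hvsum Finset.univ _ hPc]
  apply Finset.sum_congr rfl
  intro i _
  rw [hmul _ _ (hpc i) (hqc i)]
  have hpx : p i x = 0 := by simp [hp, ha]
  have hqx : q i x = fderiv ℝ F a (Pi.single i 1) := by
    have : q i x = g i a := by rw [hq]
    rw [this, hga i]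
  have hsc : ContDiff ℝ (⊤ : ℕ∞) ((-(a i)) • (1 : (Fin n → ℝ) → ℝ)) := by
    have : ((-(a i)) • (1 : (Fin n → ℝ) → ℝ)) = fun _ => -(a i) := by
      funext y; simp
    rw [this]; exact contDiff_const
  have hvp : v (p i) = v (f i) := by
    rw [hp]
    rw [hadd (f i) _ (hf i) hsc, hsmul (-(a i)) 1 smooth1, hvone, mul_zero, add_zero]
  rw [hvp, hpx, zero_mul, add_zero, hqx, mul_comm]
end

section
/- Let S ⊆ ℝⁿ, let X be a derivation of C^∞(S), and let x ∈ S. If c : I → S and c' : I' → S are both maximal integral curves of X starting at x, then I = I' and c = c'. -/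
/-- A function `f : S → ℝ` on a subset `S ⊆ ℝⁿ` is smooth if, for every `x ∈ S`,
there are an open set `U ⊆ ℝⁿ` containing `x` and a `C^∞` function `F : ℝⁿ → ℝ`
agreeing with `f` on `U ∩ S`. -/
def SmoothOnSet {n : ℕ} (S : Set (Fin n → ℝ)) (f : S → ℝ) : Prop :=
  ∀ x : S, ∃ U : Set (Fin n → ℝ), IsOpen U ∧ (x : Fin n → ℝ) ∈ U ∧
    ∃ F : (Fin n → ℝ) → ℝ, ContDiff ℝ (⊤ : ℕ∞) F ∧
      ∀ y : S, (y : Fin n → ℝ) ∈ U → F y = f y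

/-- A (global) derivation of `C^∞(S)`: an ℝ-linear map `X : C^∞(S) → C^∞(S)`
satisfying Leibniz's rule. -/
def IsDerivationOn {n : ℕ} (S : Set (Fin n → ℝ))
    (X : (S → ℝ) → (S → ℝ)) : Prop :=
  (∀ f : S → ℝ, SmoothOnSet S f → SmoothOnSet S (X f)) ∧
  (∀ f g : S → ℝ, SmoothOnSet S f → SmoothOnSet S g → X (f + g) = X f + X g) ∧
  (∀ (c : ℝ) (f : S → ℝ), SmoothOnSet S f → X (c • f) = c • X f) ∧
  (∀ f g : S → ℝ, SmoothOnSet S f → SmoothOnSet S g →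
    X (f * g) = X f * g + f * X g)

/-- An integral curve of a derivation `X` of `C^∞(S)` starting at `x ∈ S`,
with domain `I ⊆ ℝ` (an interval containing `0`, possibly the single point `{0}`),
represented by a map `c : ℝ → S` whose values matter only on `I`: `c 0 = x`, and
for every smooth `f` on `S` and every `t ∈ I`, the function `s ↦ f (c s)` is
differentiable within `I` at `t` with derivative `X f (c t)` (a condition that is
vacuous when `I = {0}`). -/
def IsIntegralCurveOfDerivation {n : ℕ} (S : Set (Fin n → ℝ))
    (X : (S → ℝ) → (S → ℝ)) (x : S) (I : Set ℝ) (c : ℝ → S) : Prop :=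
  (0 : ℝ) ∈ I ∧ I.OrdConnected ∧ c 0 = x ∧
    ∀ f : S → ℝ, SmoothOnSet S f → ∀ t ∈ I,
      HasDerivWithinAt (fun s : ℝ => f (c s)) (X f (c t)) I t


open Set Metric Real Topology

private lemma smooth_coord {n : ℕ} (S : Set (Fin n → ℝ)) (i : Fin n) :
    SmoothOnSet S (fun y : S => (y : Fin n → ℝ) i) := by
  intro x
  exact ⟨Set.univ, isOpen_univ, trivial, fun v => v i,
    (ContinuousLinearMap.proj i : (Fin n → ℝ) →L[ℝ] ℝ).contDiff, fun y _ => rfl⟩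

/-- The ℝⁿ-valued "vector field" associated to the derivation. -/
private def gX {n : ℕ} {S : Set (Fin n → ℝ)} (X : (S → ℝ) → (S → ℝ)) (y : S) :
    Fin n → ℝ := fun i => X (fun z : S => (z : Fin n → ℝ) i) y

private lemma curve_deriv {n : ℕ} {S : Set (Fin n → ℝ)} {X : (S → ℝ) → (S → ℝ)}
    {x : S} {I : Set ℝ} {c : ℝ → S}
    (hc : IsIntegralCurveOfDerivation S X x I c) {t : ℝ} (ht : t ∈ I) :
    HasDerivWithinAt (fun s : ℝ => ((c s : Fin n → ℝ))) (gX X (c t)) I t := by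
  rw [hasDerivWithinAt_pi]
  intro i
  exact hc.2.2.2 _ (smooth_coord S i) t ht

/-- Two integral curves agree on the intersection of their domains. -/
private lemma eqOn_inter {n : ℕ} {S : Set (Fin n → ℝ)} {X : (S → ℝ) → (S → ℝ)}
    (hX : IsDerivationOn S X) {x : S} {I I' : Set ℝ} {c c' : ℝ → S}
    (hc : IsIntegralCurveOfDerivation S X x I c)
    (hc' : IsIntegralCurveOfDerivation S X x I' c') :
    Set.EqOn c c' (I ∩ I') := by
  set K : Set ℝ := I ∩ I' with hKdef
  have hIo : I.OrdConnected := hc.2.1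
  have hI'o : I'.OrdConnected := hc'.2.1
  have hKo : K.OrdConnected := hIo.inter hI'o
  have h0K : (0 : ℝ) ∈ K := ⟨hc.1, hc'.1⟩
  -- local uniqueness around a point of agreement
  have key : ∀ t₀ ∈ K, c t₀ = c' t₀ →
      ∃ W : Set ℝ, IsOpen W ∧ t₀ ∈ W ∧ ∀ s ∈ W ∩ K, c s = c' s := by
    intro t₀ ht₀K heq0
    set p : Fin n → ℝ := (c t₀ : Fin n → ℝ) with hp
    have hext : ∀ i : Fin n, ∃ U : Set (Fin n → ℝ), IsOpen U ∧ p ∈ U ∧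
        ∃ F : (Fin n → ℝ) → ℝ, ContDiff ℝ (⊤ : ℕ∞) F ∧
          ∀ y : S, (y : Fin n → ℝ) ∈ U → F y = X (fun z : S => (z : Fin n → ℝ) i) y :=
      fun i => hX.1 _ (smooth_coord S i) (c t₀)
    choose U hUo hpU F hFcd hFeq using hext
    set Fv : (Fin n → ℝ) → (Fin n → ℝ) := fun y i => F i y with hFv
    have hFvcd : ContDiff ℝ (⊤ : ℕ∞) Fv := contDiff_pi.mpr hFcd
    obtain ⟨L, tset, htmem, hlip⟩ :=
      ((hFvcd.of_le (by simp)).contDiffAt (x := p)).exists_lipschitzOnWith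
    have hU₀ : (⋂ i, U i) ∈ 𝓝 p :=
      (isOpen_iInter_of_finite hUo).mem_nhds (mem_iInter.mpr hpU)
    obtain ⟨ε, hε, hball⟩ :=
      Metric.nhds_basis_closedBall.mem_iff.mp (Filter.inter_mem htmem hU₀)
    have hlip' : LipschitzOnWith L Fv (closedBall p ε) :=
      hlip.mono (fun z hz => (hball hz).1)
    have hFvg : ∀ y : S, (y : Fin n → ℝ) ∈ closedBall p ε → Fv y = gX X y := by
      intro y hy
      funext i
      exact hFeq i y (mem_iInter.mp (hball hy).2 i)
    -- continuity: stay in the ball near t₀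
    have hcc : ContinuousWithinAt (fun s : ℝ => (c s : Fin n → ℝ)) I t₀ :=
      (curve_deriv hc ht₀K.1).continuousWithinAt
    have hcc' : ContinuousWithinAt (fun s : ℝ => (c' s : Fin n → ℝ)) I' t₀ :=
      (curve_deriv hc' ht₀K.2).continuousWithinAt
    have hmem1 : (fun s : ℝ => (c s : Fin n → ℝ)) ⁻¹' ball p ε ∈ nhdsWithin t₀ I :=
      hcc (ball_mem_nhds p hε)
    have hmem2 : (fun s : ℝ => (c' s : Fin n → ℝ)) ⁻¹' ball p ε ∈ nhdsWithin t₀ I' := by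
      have hpe : ((c' t₀ : Fin n → ℝ)) = p := by rw [hp, heq0]
      apply hcc'
      show ball p ε ∈ nhds ((c' t₀ : Fin n → ℝ))
      rw [hpe]
      exact ball_mem_nhds p hε
    obtain ⟨δ₁, hδ₁, hδ₁s⟩ := Metric.mem_nhdsWithin_iff.mp hmem1
    obtain ⟨δ₂, hδ₂, hδ₂s⟩ := Metric.mem_nhdsWithin_iff.mp hmem2
    set δ : ℝ := min δ₁ δ₂ with hδdef
    have hδ : 0 < δ := lt_min hδ₁ hδ₂
    refine ⟨Ioo (t₀ - δ) (t₀ + δ), isOpen_Ioo, ⟨by linarith, by linarith⟩, ?_⟩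
    rintro s ⟨hsIoo, hsK⟩
    have hb1 : ∀ u, u ∈ I → dist u t₀ < δ → (c u : Fin n → ℝ) ∈ ball p ε := by
      intro u huI hud
      exact hδ₁s ⟨mem_ball.mpr (lt_of_lt_of_le hud (min_le_left _ _)), huI⟩
    have hb2 : ∀ u, u ∈ I' → dist u t₀ < δ → (c' u : Fin n → ℝ) ∈ ball p ε := by
      intro u huI hud
      exact hδ₂s ⟨mem_ball.mpr (lt_of_lt_of_le hud (min_le_right _ _)), huI⟩
    rcases le_total t₀ s with hle | hle
    · -- forward in time
      have hIcc : Icc t₀ s ⊆ K := hKo.out ht₀K hsK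
      have hdist : ∀ u ∈ Icc t₀ s, dist u t₀ < δ := by
        intro u hu
        rw [Real.dist_eq, abs_of_nonneg (by linarith [hu.1])]
        have := hsIoo.2; linarith [hu.2]
      have hcont1 : ContinuousOn (fun u : ℝ => (c u : Fin n → ℝ)) (Icc t₀ s) :=
        fun u hu => ((curve_deriv hc ((hIcc hu).1)).continuousWithinAt).mono
          (fun z hz => (hIcc hz).1)
      have hcont2 : ContinuousOn (fun u : ℝ => (c' u : Fin n → ℝ)) (Icc t₀ s) :=
        fun u hu => ((curve_deriv hc' ((hIcc hu).2)).continuousWithinAt).mono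
          (fun z hz => (hIcc hz).2)
      have hder1 : ∀ u ∈ Ico t₀ s,
          HasDerivWithinAt (fun u : ℝ => (c u : Fin n → ℝ)) (Fv ((c u : Fin n → ℝ))) (Ici u) u := by
        intro u hu
        have huI : u ∈ I := (hIcc ⟨hu.1, hu.2.le⟩).1
        have h1 : HasDerivWithinAt (fun v : ℝ => (c v : Fin n → ℝ)) (gX X (c u)) (Ici u ∩ Iio s) u := by
          refine (curve_deriv hc huI).mono ?_
          rw [Ici_inter_Iio]
          exact fun z hz => (hIcc ⟨le_trans hu.1 hz.1, hz.2.le⟩).1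
        rw [hFvg (c u) (ball_subset_closedBall (hb1 u huI (hdist u ⟨hu.1, hu.2.le⟩)))]
        exact (hasDerivWithinAt_inter (Iio_mem_nhds hu.2)).mp h1
      have hder2 : ∀ u ∈ Ico t₀ s,
          HasDerivWithinAt (fun u : ℝ => (c' u : Fin n → ℝ)) (Fv ((c' u : Fin n → ℝ))) (Ici u) u := by
        intro u hu
        have huI : u ∈ I' := (hIcc ⟨hu.1, hu.2.le⟩).2
        have h1 : HasDerivWithinAt (fun v : ℝ => (c' v : Fin n → ℝ)) (gX X (c' u)) (Ici u ∩ Iio s) u := by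
          refine (curve_deriv hc' huI).mono ?_
          rw [Ici_inter_Iio]
          exact fun z hz => (hIcc ⟨le_trans hu.1 hz.1, hz.2.le⟩).2
        rw [hFvg (c' u) (ball_subset_closedBall (hb2 u huI (hdist u ⟨hu.1, hu.2.le⟩)))]
        exact (hasDerivWithinAt_inter (Iio_mem_nhds hu.2)).mp h1
      have := ODE_solution_unique_of_mem_Icc_right
        (v := fun _ y => Fv y) (s := fun _ => closedBall p ε) (K := L)
        (fun _ _ => hlip') hcont1 hder1
        (fun u hu => ball_subset_closedBall
          (hb1 u (hIcc ⟨hu.1, hu.2.le⟩).1 (hdist u ⟨hu.1, hu.2.le⟩)))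
        hcont2 hder2
        (fun u hu => ball_subset_closedBall
          (hb2 u (hIcc ⟨hu.1, hu.2.le⟩).2 (hdist u ⟨hu.1, hu.2.le⟩)))
        (by rw [heq0])
      exact Subtype.coe_injective (this ⟨hle, le_rfl⟩)
    · -- backward in time
      have hIcc : Icc s t₀ ⊆ K := hKo.out hsK ht₀K
      have hdist : ∀ u ∈ Icc s t₀, dist u t₀ < δ := by
        intro u hu
        rw [Real.dist_eq, abs_of_nonpos (by linarith [hu.2])]
        have := hsIoo.1; linarith [hu.1]
      have hcont1 : ContinuousOn (fun u : ℝ => (c u : Fin n → ℝ)) (Icc s t₀) :=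
        fun u hu => ((curve_deriv hc ((hIcc hu).1)).continuousWithinAt).mono
          (fun z hz => (hIcc hz).1)
      have hcont2 : ContinuousOn (fun u : ℝ => (c' u : Fin n → ℝ)) (Icc s t₀) :=
        fun u hu => ((curve_deriv hc' ((hIcc hu).2)).continuousWithinAt).mono
          (fun z hz => (hIcc hz).2)
      have hder1 : ∀ u ∈ Ioc s t₀,
          HasDerivWithinAt (fun u : ℝ => (c u : Fin n → ℝ)) (Fv ((c u : Fin n → ℝ))) (Iic u) u := by
        intro u hu
        have huI : u ∈ I := (hIcc ⟨hu.1.le, hu.2⟩).1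
        have h1 : HasDerivWithinAt (fun v : ℝ => (c v : Fin n → ℝ)) (gX X (c u)) (Iic u ∩ Ioi s) u := by
          refine (curve_deriv hc huI).mono ?_
          rw [inter_comm, Ioi_inter_Iic]
          exact fun z hz => (hIcc ⟨hz.1.le, le_trans hz.2 hu.2⟩).1
        rw [hFvg (c u) (ball_subset_closedBall (hb1 u huI (hdist u ⟨hu.1.le, hu.2⟩)))]
        exact (hasDerivWithinAt_inter (Ioi_mem_nhds hu.1)).mp h1
      have hder2 : ∀ u ∈ Ioc s t₀,
          HasDerivWithinAt (fun u : ℝ => (c' u : Fin n → ℝ)) (Fv ((c' u : Fin n → ℝ))) (Iic u) u := by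
        intro u hu
        have huI : u ∈ I' := (hIcc ⟨hu.1.le, hu.2⟩).2
        have h1 : HasDerivWithinAt (fun v : ℝ => (c' v : Fin n → ℝ)) (gX X (c' u)) (Iic u ∩ Ioi s) u := by
          refine (curve_deriv hc' huI).mono ?_
          rw [inter_comm, Ioi_inter_Iic]
          exact fun z hz => (hIcc ⟨hz.1.le, le_trans hz.2 hu.2⟩).2
        rw [hFvg (c' u) (ball_subset_closedBall (hb2 u huI (hdist u ⟨hu.1.le, hu.2⟩)))]
        exact (hasDerivWithinAt_inter (Ioi_mem_nhds hu.1)).mp h1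
      have := ODE_solution_unique_of_mem_Icc_left
        (v := fun _ y => Fv y) (s := fun _ => closedBall p ε) (K := L)
        (fun _ _ => hlip') hcont1 hder1
        (fun u hu => ball_subset_closedBall
          (hb1 u (hIcc ⟨hu.1.le, hu.2⟩).1 (hdist u ⟨hu.1.le, hu.2⟩)))
        hcont2 hder2
        (fun u hu => ball_subset_closedBall
          (hb2 u (hIcc ⟨hu.1.le, hu.2⟩).2 (hdist u ⟨hu.1.le, hu.2⟩)))
        (by rw [heq0])
      exact Subtype.coe_injective (this ⟨le_rfl, hle⟩)
  -- separation around a point of disagreement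
  have key2 : ∀ t₀ ∈ K, c t₀ ≠ c' t₀ →
      ∃ W : Set ℝ, IsOpen W ∧ t₀ ∈ W ∧ ∀ s ∈ W ∩ K, c s ≠ c' s := by
    intro t₀ ht₀K hne
    have hg : ContinuousWithinAt
        (fun s : ℝ => (c s : Fin n → ℝ) - (c' s : Fin n → ℝ)) K t₀ :=
      (((curve_deriv hc ht₀K.1).continuousWithinAt).mono
        (fun z hz => hz.1)).sub
      (((curve_deriv hc' ht₀K.2).continuousWithinAt).mono (fun z hz => hz.2))
    have hgne : (c t₀ : Fin n → ℝ) - (c' t₀ : Fin n → ℝ) ≠ 0 :=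
      sub_ne_zero_of_ne (fun h => hne (Subtype.coe_injective h))
    have hmem : (fun s : ℝ => (c s : Fin n → ℝ) - (c' s : Fin n → ℝ)) ⁻¹' {(0 : Fin n → ℝ)}ᶜ
        ∈ nhdsWithin t₀ K := hg (isOpen_compl_singleton.mem_nhds hgne)
    obtain ⟨W, hWo, htW, hWs⟩ := mem_nhdsWithin.mp hmem
    refine ⟨W, hWo, htW, fun s hs h => ?_⟩
    exact (hWs ⟨hs.1, hs.2⟩) (by simp [h])
  -- clopen argument via preconnectedness
  intro t htK
  by_contra hne
  have hpre : IsPreconnected K := isPreconnected_iff_ordConnected.mpr hKo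
  choose W₁ hW₁o hW₁m hW₁e using fun t₀ (h : t₀ ∈ K ∧ c t₀ = c' t₀) => key t₀ h.1 h.2
  choose W₂ hW₂o hW₂m hW₂e using fun t₀ (h : t₀ ∈ K ∧ c t₀ ≠ c' t₀) => key2 t₀ h.1 h.2
  set Uu : Set ℝ := ⋃ (t₀ : ℝ) (h : t₀ ∈ K ∧ c t₀ = c' t₀), W₁ t₀ h with hUu
  set Vv : Set ℝ := ⋃ (t₀ : ℝ) (h : t₀ ∈ K ∧ c t₀ ≠ c' t₀), W₂ t₀ h with hVv
  have hUuo : IsOpen Uu := isOpen_iUnion (fun t₀ => isOpen_iUnion (fun h => hW₁o t₀ h))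
  have hVvo : IsOpen Vv := isOpen_iUnion (fun t₀ => isOpen_iUnion (fun h => hW₂o t₀ h))
  have hcover : K ⊆ Uu ∪ Vv := by
    intro z hz
    by_cases h : c z = c' z
    · exact Or.inl (mem_iUnion.mpr ⟨z, mem_iUnion.mpr ⟨⟨hz, h⟩, hW₁m z ⟨hz, h⟩⟩⟩)
    · exact Or.inr (mem_iUnion.mpr ⟨z, mem_iUnion.mpr ⟨⟨hz, h⟩, hW₂m z ⟨hz, h⟩⟩⟩)
  have h0c : c (0 : ℝ) = c' 0 := by rw [hc.2.2.1, hc'.2.2.1]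
  have hUne : (K ∩ Uu).Nonempty :=
    ⟨0, h0K, mem_iUnion.mpr ⟨0, mem_iUnion.mpr ⟨⟨h0K, h0c⟩, hW₁m 0 ⟨h0K, h0c⟩⟩⟩⟩
  have hVne : (K ∩ Vv).Nonempty :=
    ⟨t, htK, mem_iUnion.mpr ⟨t, mem_iUnion.mpr ⟨⟨htK, hne⟩, hW₂m t ⟨htK, hne⟩⟩⟩⟩
  obtain ⟨z, hzK, hzU, hzV⟩ := hpre Uu Vv hUuo hVvo hcover hUne hVne
  obtain ⟨t₁, ht₁⟩ := mem_iUnion.mp hzU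
  obtain ⟨h₁, hzW₁⟩ := mem_iUnion.mp ht₁
  obtain ⟨t₂, ht₂⟩ := mem_iUnion.mp hzV
  obtain ⟨h₂, hzW₂⟩ := mem_iUnion.mp ht₂
  exact hW₂e t₂ h₂ z ⟨hzW₂, hzK⟩ (hW₁e t₁ h₁ z ⟨hzW₁, hzK⟩)

/-- Near a point of `I \ I'`, all points of `I ∪ I'` lie in `I`. -/
private lemma localize {I I' : Set ℝ} (hIo : I.OrdConnected) (hI'o : I'.OrdConnected)
    (h0I : (0:ℝ) ∈ I) (h0I' : (0:ℝ) ∈ I') {t : ℝ} (htI : t ∈ I) (htI' : t ∉ I') :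
    ∃ N : Set ℝ, IsOpen N ∧ t ∈ N ∧ (I ∪ I') ∩ N ⊆ I := by
  rcases lt_trichotomy t 0 with ht | ht | ht
  · refine ⟨Iio 0, isOpen_Iio, ht, ?_⟩
    rintro z ⟨hz | hz, hz0⟩
    · exact hz
    · have htz : t < z := by
        by_contra h
        push_neg at h
        exact htI' (hI'o.out hz h0I' ⟨h, ht.le⟩)
      exact hIo.out htI h0I ⟨htz.le, le_of_lt hz0⟩
  · exact absurd (ht ▸ h0I') htI'
  · refine ⟨Ioi 0, isOpen_Ioi, ht, ?_⟩
    rintro z ⟨hz | hz, hz0⟩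
    · exact hz
    · have htz : z < t := by
        by_contra h
        push_neg at h
        exact htI' (hI'o.out h0I' hz ⟨ht.le, h⟩)
      exact hIo.out h0I htI ⟨le_of_lt hz0, htz.le⟩

/-- Glue two integral curves that agree on the intersection of their domains. -/
private lemma glue_integral {n : ℕ} {S : Set (Fin n → ℝ)} {X : (S → ℝ) → (S → ℝ)}
    {x : S} {I I' : Set ℝ} {c c' : ℝ → S}
    (hc : IsIntegralCurveOfDerivation S X x I c)
    (hc' : IsIntegralCurveOfDerivation S X x I' c')
    (heqK : Set.EqOn c c' (I ∩ I')) :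
    ∃ d : ℝ → S, IsIntegralCurveOfDerivation S X x (I ∪ I') d ∧
      (∀ s ∈ I, d s = c s) ∧ (∀ s ∈ I', d s = c' s) := by
  classical
  set d : ℝ → S := fun s => if s ∈ I then c s else c' s with hd
  have hdI : ∀ s ∈ I, d s = c s := by
    intro s hs; simp only [hd]; exact if_pos hs
  have hdI' : ∀ s ∈ I', d s = c' s := by
    intro s hs
    by_cases h : s ∈ I
    · simp only [hd, if_pos h]; exact heqK ⟨h, hs⟩
    · simp only [hd]; exact if_neg h
  refine ⟨d, ?_, hdI, hdI'⟩
  have hIo : I.OrdConnected := hc.2.1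
  have hI'o : I'.OrdConnected := hc'.2.1
  refine ⟨Or.inl hc.1, ?_, by rw [hdI 0 hc.1, hc.2.2.1], ?_⟩
  · constructor
    rintro a (ha | ha) b (hb | hb) z hz
    · exact Or.inl (hIo.out ha hb hz)
    · rcases le_total z 0 with hz0 | hz0
      · exact Or.inl (hIo.out ha hc.1 ⟨hz.1, hz0⟩)
      · exact Or.inr (hI'o.out hc'.1 hb ⟨hz0, hz.2⟩)
    · rcases le_total z 0 with hz0 | hz0
      · exact Or.inr (hI'o.out ha hc'.1 ⟨hz.1, hz0⟩)
      · exact Or.inl (hIo.out hc.1 hb ⟨hz0, hz.2⟩)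
    · exact Or.inr (hI'o.out ha hb hz)
  · intro f hf t ht
    by_cases htI : t ∈ I <;> by_cases htI' : t ∈ I'
    · rw [hdI t htI]
      have h1 : HasDerivWithinAt (fun s : ℝ => f (d s)) (X f (c t)) I t :=
        (hc.2.2.2 f hf t htI).congr (fun y hy => congrArg f (hdI y hy))
          (congrArg f (hdI t htI))
      have h2 : HasDerivWithinAt (fun s : ℝ => f (d s)) (X f (c t)) I' t := by
        have := (hc'.2.2.2 f hf t htI').congr (fun y hy => congrArg f (hdI' y hy))
          (congrArg f (hdI' t htI'))
        rwa [show c' t = c t from (heqK ⟨htI, htI'⟩).symm] at this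
      exact h1.union h2
    · rw [hdI t htI]
      obtain ⟨N, hNo, htN, hNs⟩ := localize hIo hI'o hc.1 hc'.1 htI htI'
      have h1 : HasDerivWithinAt (fun s : ℝ => f (d s)) (X f (c t)) ((I ∪ I') ∩ N) t :=
        ((hc.2.2.2 f hf t htI).mono hNs).congr
          (fun y hy => congrArg f (hdI y (hNs hy))) (congrArg f (hdI t htI))
      exact (hasDerivWithinAt_inter (hNo.mem_nhds htN)).mp h1
    · rw [hdI' t htI']
      obtain ⟨N, hNo, htN, hNs⟩ := localize hI'o hIo hc'.1 hc.1 htI' htI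
      rw [union_comm] at hNs
      have h1 : HasDerivWithinAt (fun s : ℝ => f (d s)) (X f (c' t)) ((I ∪ I') ∩ N) t :=
        ((hc'.2.2.2 f hf t htI').mono hNs).congr
          (fun y hy => congrArg f (hdI' y (hNs hy))) (congrArg f (hdI' t htI'))
      exact (hasDerivWithinAt_inter (hNo.mem_nhds htN)).mp h1
    · exact absurd ht (by simp [htI, htI'])

/-- maximal integral curves of a derivation `X` of `C^∞(S)`,
`S ⊆ ℝⁿ`, starting at `x ∈ S` are unique: if `c : I → S` and `c' : I' → S` are
both maximal integral curves of `X` starting at `x`, then `I = I'` and `c = c'`. -/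
theorem maximal_integralCurve_unique {n : ℕ} (S : Set (Fin n → ℝ))
    (X : (S → ℝ) → (S → ℝ)) (hX : IsDerivationOn S X) (x : S)
    (I : Set ℝ) (c : ℝ → S) (hc : IsIntegralCurveOfDerivation S X x I c)
    (hmax : ∀ (J : Set ℝ) (d : ℝ → S), IsIntegralCurveOfDerivation S X x J d →
      I ⊆ J → Set.EqOn d c I → J = I)
    (I' : Set ℝ) (c' : ℝ → S) (hc' : IsIntegralCurveOfDerivation S X x I' c')
    (hmax' : ∀ (J : Set ℝ) (d : ℝ → S), IsIntegralCurveOfDerivation S X x J d →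
      I' ⊆ J → Set.EqOn d c' I' → J = I') :
    I = I' ∧ Set.EqOn c c' I := by
  have heqK : Set.EqOn c c' (I ∩ I') := eqOn_inter hX hc hc'
  have heqK' : Set.EqOn c' c (I' ∩ I) := by
    rw [Set.inter_comm]; exact fun z hz => (heqK hz).symm
  obtain ⟨d₁, hd₁, hd₁I, _⟩ := glue_integral hc hc' heqK
  obtain ⟨d₂, hd₂, hd₂I', _⟩ := glue_integral hc' hc heqK'
  have hII' : I ∪ I' = I :=
    hmax (I ∪ I') _ hd₁ Set.subset_union_left (fun s hs => hd₁I s hs)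
  have hI'I : I' ∪ I = I' :=
    hmax' (I' ∪ I) _ hd₂ Set.subset_union_left (fun s hs => hd₂I' s hs)
  have hIeq : I = I' := by
    apply Set.Subset.antisymm
    · rw [← hI'I]; exact Set.subset_union_right
    · rw [← hII']; exact Set.subset_union_right
  refine ⟨hIeq, fun t ht => heqK ⟨ht, hIeq ▸ ht⟩⟩
end
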